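/- The Thue–Morse autocorrelation σ satisfies σ(0) = 1, σ(1) = -1/3, and for all n ∈ ℕ, σ(2n) = σ(n) and σ(2n+1) = -(σ(n) + σ(n+1))/2. -/

import Mathlib

/-- The Thue–Morse sequence: parity of the number of 1s in binary representation. -/
def t (n : ℕ) : ℕ := (Nat.digits 2 n).count 1 % 2

/-!
Since `t (2n) = t n` and `t (2n+1) = 1 - t n`, splitting the first `2N` terms of the correlation
sum according to the parity of the index expresses the sum for shift `2k` (resp. `2k+1`) through
the length-`N` sums for shifts `k` (resp. `k` and `k+1`). Passing to the limit along `N ↦ 2N`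
gives the two recurrences; `σ 0 = 1` is immediate and `σ 1 = -1/3` is the odd recurrence at `0`.
-/

open Finset Filter Topology

lemma t_two_mul (n : ℕ) : t (2 * n) = t n := by
  rcases eq_or_ne n 0 with rfl | hn
  · rfl
  · simpa [t] using congrArg (fun l => l.count 1 % 2)
      (Nat.digits_add 2 one_lt_two 0 n two_pos (Or.inr hn))

lemma t_two_mul_add_one (n : ℕ) : t (2 * n + 1) = (t n + 1) % 2 := by
  have h := Nat.digits_add 2 one_lt_two 1 n one_lt_two (Or.inl one_ne_zero)
  rw [add_comm 1] at h
  rw [t, t, h, List.count_cons_self, Nat.mod_add_mod]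

section Sign

variable {R : Type*} [Ring R]

lemma neg_one_pow_t_two_mul (n : ℕ) : (-1 : R) ^ t (2 * n) = (-1) ^ t n := by
  rw [t_two_mul]

lemma neg_one_pow_t_two_mul_add_one (n : ℕ) : (-1 : R) ^ t (2 * n + 1) = -(-1) ^ t n := by
  rw [t_two_mul_add_one, ← neg_one_pow_eq_pow_mod_two, pow_succ, mul_neg_one]

end Sign

lemma Finset.sum_range_two_mul {M : Type*} [AddCommMonoid M] (f : ℕ → M) (N : ℕ) :
    ∑ i ∈ range (2 * N), f i = ∑ j ∈ range N, (f (2 * j) + f (2 * j + 1)) := by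
  induction N with
  | zero => simp
  | succ N ih =>
    rw [Nat.mul_succ, sum_range_succ, sum_range_succ, sum_range_succ, ih, add_assoc]

noncomputable def tmCorrSum (k N : ℕ) : ℝ := ∑ i ∈ range N, (-1 : ℝ) ^ (t i + t (i + k))

noncomputable def tmCorrAvg (k N : ℕ) : ℝ := (1 / (N : ℝ)) * tmCorrSum k N

lemma tmCorrSum_zero_left (N : ℕ) : tmCorrSum 0 N = N := by
  simp [tmCorrSum, ← two_mul, pow_mul]

lemma tmCorrSum_two_mul_two_mul (k N : ℕ) : tmCorrSum (2 * k) (2 * N) = 2 * tmCorrSum k N := by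
  rw [tmCorrSum, tmCorrSum, sum_range_two_mul, mul_sum]
  refine sum_congr rfl fun j _ => ?_
  rw [show 2 * j + 2 * k = 2 * (j + k) by ring, show 2 * j + 1 + 2 * k = 2 * (j + k) + 1 by ring]
  simp only [pow_add, neg_one_pow_t_two_mul, neg_one_pow_t_two_mul_add_one]
  ring

lemma tmCorrSum_two_mul_add_one_two_mul (k N : ℕ) :
    tmCorrSum (2 * k + 1) (2 * N) = -(tmCorrSum k N + tmCorrSum (k + 1) N) := by
  rw [tmCorrSum, tmCorrSum, tmCorrSum, sum_range_two_mul, ← sum_add_distrib, ← sum_neg_distrib]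
  refine sum_congr rfl fun j _ => ?_
  rw [show 2 * j + (2 * k + 1) = 2 * (j + k) + 1 by ring,
    show 2 * j + 1 + (2 * k + 1) = 2 * (j + (k + 1)) by ring]
  simp only [pow_add, neg_one_pow_t_two_mul, neg_one_pow_t_two_mul_add_one]
  ring

lemma tmCorrAvg_zero_left {N : ℕ} (hN : N ≠ 0) : tmCorrAvg 0 N = 1 := by
  rw [tmCorrAvg, tmCorrSum_zero_left, one_div_mul_cancel (Nat.cast_ne_zero.mpr hN)]

lemma tmCorrAvg_two_mul_two_mul (k N : ℕ) : tmCorrAvg (2 * k) (2 * N) = tmCorrAvg k N := by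
  rw [tmCorrAvg, tmCorrAvg, tmCorrSum_two_mul_two_mul]
  push_cast
  ring

lemma tmCorrAvg_two_mul_add_one_two_mul (k N : ℕ) :
    tmCorrAvg (2 * k + 1) (2 * N) = -(tmCorrAvg k N + tmCorrAvg (k + 1) N) / 2 := by
  rw [tmCorrAvg, tmCorrAvg, tmCorrAvg, tmCorrSum_two_mul_add_one_two_mul]
  push_cast
  ring

theorem thue_morse_autocorrelation_recurrence (σ : ℕ → ℝ)
    (hσ : ∀ k : ℕ, Filter.Tendsto
      (fun N : ℕ => (1 / (N : ℝ)) * ∑ i ∈ Finset.range N, (-1 : ℝ) ^ (t i + t (i + k)))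
      Filter.atTop (nhds (σ k))) :
    σ 0 = 1 ∧ σ 1 = -1/3 ∧
      (∀ n : ℕ, σ (2 * n) = σ n) ∧ (∀ n : ℕ, σ (2 * n + 1) = -(σ n + σ (n + 1)) / 2) := by
  have hlim : ∀ k, Tendsto (tmCorrAvg k) atTop (𝓝 (σ k)) := hσ
  have hsub : ∀ k, Tendsto (fun N => tmCorrAvg k (2 * N)) atTop (𝓝 (σ k)) := fun k =>
    (hlim k).comp (tendsto_id.const_mul_atTop' two_pos)
  have h0 : σ 0 = 1 := tendsto_nhds_unique (hlim 0) <| tendsto_const_nhds.congr' <|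
    (eventually_ne_atTop 0).mono fun N hN => (tmCorrAvg_zero_left hN).symm
  have heven : ∀ n, σ (2 * n) = σ n := fun n =>
    tendsto_nhds_unique (by simpa only [tmCorrAvg_two_mul_two_mul] using hsub (2 * n)) (hlim n)
  have hodd : ∀ n, σ (2 * n + 1) = -(σ n + σ (n + 1)) / 2 := fun n =>
    tendsto_nhds_unique (by simpa only [tmCorrAvg_two_mul_add_one_two_mul] using hsub (2 * n + 1))
      (((hlim n).add (hlim (n + 1))).neg.div_const 2)
  have h1 := hodd 0
  simp only [mul_zero, zero_add, h0] at h1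
  exact ⟨h0, by linarith, heven, hodd⟩
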